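/- Let p be an odd natural number with p ≥ 3. Consider the set of natural numbers m for which there exist a finite set S ⊆ Fin p with |S| = m and a sign sequence ε of length p such that every sign sequence δ of length p agreeing with ε on S satisfies |∑_{i} δ i| ≥ 3. The least element of this set is (p+3)/2. -/

import Mathlib

/-!
If `S` is fixed with all signs `+1`, every resolution has sum at least `|S| - |Sᶜ| = 2|S| - p`,
which is `3` for `|S| = (p + 3) / 2`. Conversely, if `2|S| ≤ p + 1` then the fixed part
contributes at most `|S| ≤ |Sᶜ| + 1` in absolute value, and the free signs can be chosen
greedily, each one pushing the running sum towards `0`, so that the total is `0` or `±1`.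
-/

open Finset

variable {ι : Type*}

def IsSignSeq (δ : ι → ℤ) : Prop := ∀ i, δ i = 1 ∨ δ i = -1

lemma IsSignSeq.abs_sum_le {δ : ι → ℤ} (hδ : IsSignSeq δ) (T : Finset ι) :
    |∑ i ∈ T, δ i| ≤ #T := by
  calc |∑ i ∈ T, δ i| ≤ ∑ i ∈ T, |δ i| := abs_sum_le_sum_abs _ _
    _ = ∑ _i ∈ T, (1 : ℤ) := sum_congr rfl fun i _ => by rcases hδ i with h | h <;> simp [h]
    _ = #T := by simp

lemma IsSignSeq.two_mul_card_sub_card_le_sum [Fintype ι] {δ : ι → ℤ} (hδ : IsSignSeq δ)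
    {S : Finset ι} (hS : ∀ i ∈ S, δ i = 1) :
    2 * (#S : ℤ) - Fintype.card ι ≤ ∑ i, δ i := by
  classical
  have hfixed : ∑ i ∈ S, δ i = #S := by simp [sum_congr rfl hS]
  have hfree := abs_le.mp (hδ.abs_sum_le Sᶜ)
  have hcard : (#Sᶜ : ℤ) = Fintype.card ι - #S := by
    rw [card_compl, Nat.cast_sub (card_le_univ S)]
  rw [← sum_add_sum_compl S δ]
  linarith [hfree.1]

lemma exists_isSignSeq_abs_add_sum_le_one [DecidableEq ι] (T : Finset ι) (s : ℤ)
    (hs : |s| ≤ #T + 1) : ∃ δ : ι → ℤ, IsSignSeq δ ∧ |s + ∑ i ∈ T, δ i| ≤ 1 := by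
  induction T using Finset.induction_on generalizing s with
  | empty => exact ⟨fun _ => 1, fun _ => Or.inl rfl, by simpa using hs⟩
  | @insert a T ha ih =>
    set σ : ℤ := if 0 < s then -1 else 1 with hσ
    have hσs : |s + σ| ≤ #T + 1 := by
      rw [card_insert_of_notMem ha, abs_le] at hs
      push_cast at hs
      rw [abs_le]
      split_ifs at hσ <;> constructor <;> linarith
    obtain ⟨δ, hδ, hsum⟩ := ih (s + σ) hσs
    refine ⟨Function.update δ a σ, fun i => ?_, ?_⟩
    · rcases eq_or_ne i a with rfl | hi
      · simp only [Function.update_self, hσ]; split_ifs <;> simp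
      · simpa [Function.update_of_ne hi] using hδ i
    · rw [sum_insert ha, sum_update_of_notMem ha, Function.update_self, ← add_assoc]
      exact hsum

lemma exists_isSignSeq_eqOn_abs_sum_le_one [Fintype ι] [DecidableEq ι] {ε : ι → ℤ}
    (hε : IsSignSeq ε) {S : Finset ι} (hS : 2 * #S ≤ Fintype.card ι + 1) :
    ∃ δ : ι → ℤ, IsSignSeq δ ∧ (∀ i ∈ S, δ i = ε i) ∧ |∑ i, δ i| ≤ 1 := by
  have hfixed : |∑ i ∈ S, ε i| ≤ #Sᶜ + 1 := by
    have hcard : #S ≤ #Sᶜ + 1 := by rw [card_compl]; omega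
    exact (hε.abs_sum_le S).trans (by exact_mod_cast hcard)
  obtain ⟨η, hη, hfree⟩ := exists_isSignSeq_abs_add_sum_le_one Sᶜ _ hfixed
  refine ⟨S.piecewise ε η, fun i => ?_, fun i hi => S.piecewise_eq_of_mem ε η hi, ?_⟩
  · by_cases hi : i ∈ S
    · simpa [hi] using hε i
    · simpa [hi] using hη i
  · rwa [← sum_add_sum_compl S,
      sum_congr rfl fun i hi => S.piecewise_eq_of_mem ε η hi,
      sum_congr rfl fun i hi => S.piecewise_eq_of_notMem ε η (mem_compl.mp hi)]

/-- Let `p` be an odd natural number with `p ≥ 3`. The set of natural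
numbers `m` for which there exist a finite set `S ⊆ Fin p` with `|S| = m` and a sign
sequence `ε` of length `p` such that every sign sequence `δ` of length `p` agreeing
with `ε` on `S` satisfies `|∑ i, δ i| ≥ 3`, has least element `(p + 3) / 2`. -/
theorem knotting_number_torus_shadow (p : ℕ) (hp : Odd p) (hp3 : 3 ≤ p) :
    IsLeast {m : ℕ | ∃ S : Finset (Fin p), S.card = m ∧
        ∃ ε : Fin p → ℤ, (∀ i, ε i = 1 ∨ ε i = -1) ∧
          ∀ δ : Fin p → ℤ, (∀ i, δ i = 1 ∨ δ i = -1) →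
            (∀ i ∈ S, δ i = ε i) → 3 ≤ |∑ i, δ i|}
      ((p + 3) / 2) := by
  obtain ⟨q, rfl⟩ := hp
  constructor
  · obtain ⟨S, -, hS⟩ := exists_subset_card_eq (s := (univ : Finset (Fin (2 * q + 1))))
      (n := (2 * q + 1 + 3) / 2) (by rw [card_univ, Fintype.card_fin]; omega)
    refine ⟨S, hS, fun _ => 1, fun _ => Or.inl rfl, fun δ hδ hSδ => ?_⟩
    have hsum := IsSignSeq.two_mul_card_sub_card_le_sum hδ hSδ
    rw [hS, Fintype.card_fin] at hsum
    exact le_abs.mpr (Or.inl (by omega))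
  · rintro m ⟨S, rfl, ε, hε, hS⟩
    by_contra! hsmall
    obtain ⟨δ, hδ, hSδ, hsum⟩ :=
      exists_isSignSeq_eqOn_abs_sum_le_one hε (S := S) (by rw [Fintype.card_fin]; omega)
    linarith [hS δ hδ hSδ]
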